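/- arXiv:2409.01723 — 2 statements merged into one kernel-verified Lean document; each statement's English description precedes it below -/
import Mathlib

section
/- For every natural number n ≥ 6, the identity C(n-1,4) + (n-2) + 1 + Σ_{j=5}^{n-1} (2 + (n-j) + C(j-3,2)) + C(n-4,2) = C(n,4) holds, where C(a,b) denotes the binomial coefficient. -/
/-! Writing `n = m + 6` and reindexing by `j = i + 5`, the sum splits into a constant part, an
arithmetic series and a hockey-stick sum, giving `2 (m + 1) + C(m+2, 2) + C(m+3, 3)`. What remains
is an identity between binomial coefficients that Pascal's rule reduces to linear arithmetic. -/

open Finset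

lemma sum_range_sub_add_one (m : ℕ) : ∑ i ∈ range (m + 1), (m - i + 1) = (m + 2).choose 2 := by
  rw [← sum_range_reflect, ← Nat.sum_range_add_choose m 1]
  refine sum_congr rfl fun i hi => ?_
  rw [mem_range] at hi
  rw [Nat.choose_one_right]
  omega

lemma sum_Icc_five_two_add_sub_add_choose (m : ℕ) :
    ∑ j ∈ Icc 5 (m + 5), (2 + (m + 6 - j) + (j - 3).choose 2)
      = 2 * (m + 1) + (m + 2).choose 2 + (m + 3).choose 3 := by
  rw [← Ico_add_one_right_eq_Icc, sum_Ico_eq_sum_range, show m + 5 + 1 - 5 = m + 1 by omega]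
  have hshift : ∀ i ∈ range (m + 1), 2 + (m + 6 - (5 + i)) + (5 + i - 3).choose 2
      = 2 + (m - i + 1) + (i + 2).choose 2 := fun i hi => by
    rw [mem_range] at hi
    rw [show 5 + i - 3 = i + 2 by omega, show m + 6 - (5 + i) = m - i + 1 by omega]
  rw [sum_congr rfl hshift, sum_add_distrib, sum_add_distrib, sum_const, card_range, smul_eq_mul,
    sum_range_sub_add_one, Nat.sum_range_add_choose]
  ring

theorem stmt_0 (n : ℕ) (hn : 6 ≤ n) :
    (n - 1).choose 4 + (n - 2) + 1 +
      (∑ j ∈ Finset.Icc 5 (n - 1), (2 + (n - j) + (j - 3).choose 2)) +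
      (n - 4).choose 2 = n.choose 4 := by
  obtain ⟨m, rfl⟩ : ∃ m, n = m + 6 := ⟨n - 6, by omega⟩
  rw [show m + 6 - 1 = m + 5 by omega, show m + 6 - 4 = m + 2 by omega,
    sum_Icc_five_two_add_sub_add_choose]
  simp only [Nat.choose_succ_succ', Nat.choose_zero_right, Nat.choose_one_right, Nat.reduceAdd]
  omega
end

section
/- Every set of 5 points in the plane in general position (no three collinear) contains 4 points in convex position, i.e., 4 points such that none of them lies in the convex hull of the other three. -/
/-!
At least three of the five points are extreme points of their convex hull: by Krein–Milman the
hull is the hull of its extreme points, so otherwise all five points would lie on the affine span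
of at most two points. Choose two points `d`, `e` such that the remaining three `a`, `b`, `c` are
extreme. None of `a`, `b`, `c` lies on the line `de`, so two of them, say `a` and `b`, lie strictly
on the same side of it. Then `{a, b, d, e}` is in convex position: `a` and `b` are extreme even
among all five points, and a convex combination of `a`, `b` and `e` that lies on the line `de`
can only be `e` itself (likewise with `d` and `e` exchanged).
-/

open Set Module

section Collinear

variable {k V P : Type*} [DivisionRing k] [AddCommGroup V] [Module k V] [AddTorsor V P]

theorem collinear_affineSpan_iff {s : Set P} :
    Collinear k (affineSpan k s : Set P) ↔ Collinear k s := by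
  unfold Collinear
  rw [← AffineSubspace.direction, direction_affineSpan]

theorem collinear_of_ncard_le_two {s : Set P} (hs : s.Finite) (h : s.ncard ≤ 2) :
    Collinear k s := by
  interval_cases hn : s.ncard
  · rw [Set.ncard_eq_zero hs] at hn
    exact hn ▸ collinear_empty k P
  · obtain ⟨x, rfl⟩ := Set.ncard_eq_one.mp hn
    exact collinear_singleton k x
  · obtain ⟨x, y, -, rfl⟩ := Set.ncard_eq_two.mp hn
    exact collinear_pair k x y

end Collinear

section KreinMilman

variable {E : Type*} [AddCommGroup E] [Module ℝ E] [TopologicalSpace E] [T2Space E]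
  [IsTopologicalAddGroup E] [ContinuousSMul ℝ E] [LocallyConvexSpace ℝ E] {s : Set E}

theorem Set.Finite.convexHull_extremePoints_convexHull (hs : s.Finite) :
    convexHull ℝ ((convexHull ℝ s).extremePoints ℝ) = convexHull ℝ s := by
  have hfin : ((convexHull ℝ s).extremePoints ℝ).Finite :=
    hs.subset extremePoints_convexHull_subset
  conv_rhs =>
    rw [← closure_convexHull_extremePoints (hs.isCompact_convexHull ℝ) (convex_convexHull ℝ s)]
  exact (hfin.isCompact_convexHull ℝ).isClosed.closure_eq.symm

theorem Set.Finite.two_lt_ncard_extremePoints_convexHull (hs : s.Finite)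
    (h : ¬ Collinear ℝ s) : 2 < ((convexHull ℝ s).extremePoints ℝ).ncard := by
  by_contra! hle
  have hfin : ((convexHull ℝ s).extremePoints ℝ).Finite :=
    hs.subset extremePoints_convexHull_subset
  refine h ((collinear_affineSpan_iff.mpr (collinear_of_ncard_le_two hfin hle)).subset ?_)
  calc s ⊆ convexHull ℝ s := subset_convexHull ℝ s
    _ = convexHull ℝ ((convexHull ℝ s).extremePoints ℝ) :=
      hs.convexHull_extremePoints_convexHull.symm
    _ ⊆ _ := convexHull_subset_affineSpan _

theorem exists_three_extremePoints {ι : Type*} [Finite ι] {p : ι → E}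
    (h : ¬ Collinear ℝ (range p)) :
    ∃ a b c, a ≠ b ∧ a ≠ c ∧ b ≠ c ∧ p a ∈ (convexHull ℝ (range p)).extremePoints ℝ ∧
      p b ∈ (convexHull ℝ (range p)).extremePoints ℝ ∧
      p c ∈ (convexHull ℝ (range p)).extremePoints ℝ := by
  obtain ⟨_, hx, _, hy, _, hz, hxy, hxz, hyz⟩ :=
    (Set.two_lt_ncard ((finite_range p).subset extremePoints_convexHull_subset)).mp
      ((finite_range p).two_lt_ncard_extremePoints_convexHull h)
  obtain ⟨a, rfl⟩ := extremePoints_convexHull_subset hx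
  obtain ⟨b, rfl⟩ := extremePoints_convexHull_subset hy
  obtain ⟨c, rfl⟩ := extremePoints_convexHull_subset hz
  exact ⟨a, b, c, ne_of_apply_ne p hxy, ne_of_apply_ne p hxz, ne_of_apply_ne p hyz, hx, hy, hz⟩

end KreinMilman

section Line

variable {K E : Type*} [Field K] [AddCommGroup E] [Module K E]

theorem exists_ker_eq_span_singleton (hE : finrank K E = 2) {v : E} (hv : v ≠ 0) :
    ∃ g : E →ₗ[K] K, LinearMap.ker g = K ∙ v := by
  have : FiniteDimensional K E := Module.finite_of_finrank_eq_succ hE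
  have hlt : K ∙ v < ⊤ := by
    refine lt_top_iff_ne_top.mpr fun h => ?_
    have := finrank_span_singleton (K := K) hv
    rw [h, finrank_top, hE] at this
    omega
  obtain ⟨g, hg, hmap⟩ := Submodule.exists_dual_map_eq_bot_of_lt_top hlt inferInstance
  refine ⟨g, (Submodule.eq_of_le_of_finrank_le (LinearMap.le_ker_iff_map.mpr hmap) ?_).symm⟩
  have := Submodule.finrank_lt (mt LinearMap.ker_eq_top.mp hg)
  rw [finrank_span_singleton hv]
  omega

theorem exists_linearMap_eq_iff_mem_line (hE : finrank K E = 2) {d e : E} (hde : d ≠ e) :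
    ∃ g : E →ₗ[K] K, ∀ x, g x = g d ↔ x ∈ line[K, d, e] := by
  obtain ⟨g, hg⟩ := exists_ker_eq_span_singleton hE (sub_ne_zero.mpr hde.symm)
  refine ⟨g, fun x => ?_⟩
  rw [← AffineSubspace.vsub_right_mem_direction_iff_mem (left_mem_affineSpan_pair K d e),
    direction_affineSpan, vectorSpan_pair_rev, vsub_eq_sub, vsub_eq_sub, ← hg, LinearMap.mem_ker,
    map_sub, sub_eq_zero]

end Line

section Real

variable {E : Type*} [AddCommGroup E] [Module ℝ E]

theorem exists_linearMap_two_above_line (hE : finrank ℝ E = 2) {d e a b c : E} (hde : d ≠ e)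
    (ha : ¬ Collinear ℝ {d, e, a}) (hb : ¬ Collinear ℝ {d, e, b}) (hc : ¬ Collinear ℝ {d, e, c}) :
    ∃ g : E →ₗ[ℝ] ℝ, g d = g e ∧
      (g d < g a ∧ g d < g b ∨ g d < g a ∧ g d < g c ∨ g d < g b ∧ g d < g c) := by
  obtain ⟨g, hg⟩ := exists_linearMap_eq_iff_mem_line hE hde
  have hge : g d = g e := ((hg e).mpr (right_mem_affineSpan_pair ℝ d e)).symm
  have off_line : ∀ {x}, ¬ Collinear ℝ {d, e, x} → g x ≠ g d := fun hx h => hx <| by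
    have := collinear_insert_of_mem_affineSpan_pair ((hg _).mp h)
    rwa [Set.insert_comm, Set.pair_comm] at this
  rcases (off_line ha).lt_or_gt with ha | ha <;> rcases (off_line hb).lt_or_gt with hb | hb <;>
    rcases (off_line hc).lt_or_gt with hc | hc
  -- two of the three points are on the same side; if it is the negative one, use `-g`
  all_goals first
    | exact ⟨g, hge, by tauto⟩
    | exact ⟨-g, by simp [hge], by simp only [LinearMap.neg_apply, neg_lt_neg_iff]; tauto⟩

theorem notMem_convexHull_insert_setOf_lt (g : E →ₗ[ℝ] ℝ) {x y : E} (hxy : x ≠ y)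
    (hg : g x = g y) : x ∉ convexHull ℝ (insert y {z | g x < g z}) := by
  rcases Set.eq_empty_or_nonempty {z | g x < g z} with h | h
  · simpa [h] using hxy
  rw [convexHull_insert h, (convex_halfSpace_gt g.isLinear _).convexHull_eq]
  intro hmem
  obtain ⟨y', hy', z, hz, s, t, -, -, hst, hx⟩ := mem_convexJoin.mp hmem
  rw [mem_singleton_iff.mp hy'] at hx
  have hgx : s * g y + t * g z = g x := by simpa using congrArg g hx
  have ht : t * (g z - g x) = 0 := by linear_combination hgx + s * hg - g x * hst
  obtain rfl : t = 0 := (mul_eq_zero.mp ht).resolve_right (sub_ne_zero.mpr (ne_of_gt hz))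
  obtain rfl : s = 1 := by linarith
  exact hxy (by simpa using hx.symm)

variable {ι : Type*} {p : ι → E}

theorem notMem_convexHull_image_of_forall_eq_or_lt (hp : Function.Injective p) (g : E →ₗ[ℝ] ℝ)
    {i j : ι} {t : Set ι} (hij : i ≠ j) (hg : g (p i) = g (p j))
    (ht : ∀ k ∈ t, k = j ∨ g (p i) < g (p k)) : p i ∉ convexHull ℝ (p '' t) := by
  refine fun h => notMem_convexHull_insert_setOf_lt g (hp.ne hij) hg (convexHull_mono ?_ h)
  rintro _ ⟨k, hk, rfl⟩
  rcases ht k hk with rfl | hlt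
  exacts [mem_insert _ _, Or.inr hlt]

theorem notMem_convexHull_image_of_mem_extremePoints (hp : Function.Injective p) {i : ι}
    {t : Set ι} (hi : p i ∈ (convexHull ℝ (range p)).extremePoints ℝ) (ht : i ∉ t) :
    p i ∉ convexHull ℝ (p '' t) := by
  rw [(convex_convexHull ℝ _).mem_extremePoints_iff_mem_sdiff_convexHull_sdiff] at hi
  refine fun h => hi.2 (convexHull_mono ?_ h)
  rintro _ ⟨j, hj, rfl⟩
  exact ⟨subset_convexHull ℝ _ (mem_range_self j), fun hji => ht (hp hji ▸ hj)⟩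

theorem exists_convexPosition_four_of_two_above_line [DecidableEq ι] (hp : Function.Injective p)
    {a b d e : ι} (hab : a ≠ b) (hde : d ≠ e) (g : E →ₗ[ℝ] ℝ) (hg : g (p d) = g (p e))
    (had : g (p d) < g (p a)) (hbd : g (p d) < g (p b))
    (ha : p a ∈ (convexHull ℝ (range p)).extremePoints ℝ)
    (hb : p b ∈ (convexHull ℝ (range p)).extremePoints ℝ) :
    ∃ s : Finset ι, s.card = 4 ∧ ∀ i ∈ s, p i ∉ convexHull ℝ (p '' ↑(s.erase i)) := by
  have above : ∀ {j}, g (p d) < g (p j) → j ≠ d ∧ j ≠ e := fun h =>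
    ⟨by rintro rfl; exact h.ne rfl, by rintro rfl; exact h.ne hg⟩
  obtain ⟨had', hae'⟩ := above had
  obtain ⟨hbd', hbe'⟩ := above hbd
  refine ⟨{a, b, d, e}, by simp [*], fun i hi => ?_⟩
  simp only [Finset.mem_insert, Finset.mem_singleton] at hi
  rcases hi with rfl | rfl | rfl | rfl
  · exact notMem_convexHull_image_of_mem_extremePoints hp ha (by simp)
  · exact notMem_convexHull_image_of_mem_extremePoints hp hb (by simp)
  · refine notMem_convexHull_image_of_forall_eq_or_lt hp g hde hg fun k hk => ?_
    simp only [Finset.coe_erase, Finset.coe_insert, Finset.coe_singleton, mem_sdiff,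
      mem_insert_iff, mem_singleton_iff] at hk
    rcases hk with ⟨rfl | rfl | rfl | rfl, hk⟩ <;> simp_all
  · refine notMem_convexHull_image_of_forall_eq_or_lt hp g hde.symm hg.symm fun k hk => ?_
    simp only [Finset.coe_erase, Finset.coe_insert, Finset.coe_singleton, mem_sdiff,
      mem_insert_iff, mem_singleton_iff] at hk
    rcases hk with ⟨rfl | rfl | rfl | rfl, hk⟩ <;> simp_all

end Real

theorem Finset.exists_ne_notMem_of_card_add_two {ι : Type*} [Fintype ι] [DecidableEq ι]
    {s : Finset ι} (h : s.card + 2 = Fintype.card ι) : ∃ d e, d ≠ e ∧ d ∉ s ∧ e ∉ s := by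
  obtain ⟨d, e, hde, hsc⟩ :=
    Finset.card_eq_two.mp (by rw [Finset.card_compl]; omega : sᶜ.card = 2)
  exact ⟨d, e, hde, Finset.mem_compl.mp (by simp [hsc]), Finset.mem_compl.mp (by simp [hsc])⟩

theorem stmt_15 (p : Fin 5 → EuclideanSpace ℝ (Fin 2))
    (hinj : Function.Injective p)
    (hgen : ∀ i j k : Fin 5, i ≠ j → j ≠ k → i ≠ k →
      ¬ Collinear ℝ ({p i, p j, p k} : Set (EuclideanSpace ℝ (Fin 2)))) :
    ∃ s : Finset (Fin 5), s.card = 4 ∧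
      ∀ i ∈ s, p i ∉ convexHull ℝ (p '' ↑(s.erase i)) := by
  have hp : ¬ Collinear ℝ (range p) := fun h =>
    hgen 0 1 2 (by decide) (by decide) (by decide) (h.subset (by simp [insert_subset_iff]))
  obtain ⟨a, b, c, hab, hac, hbc, ha, hb, hc⟩ := exists_three_extremePoints hp
  obtain ⟨d, e, hde, hd, he⟩ := Finset.exists_ne_notMem_of_card_add_two (s := {a, b, c})
    (by rw [Finset.card_eq_three.mpr ⟨a, b, c, hab, hac, hbc, rfl⟩]; rfl)
  simp only [Finset.mem_insert, Finset.mem_singleton, not_or] at hd he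
  have off_line : ∀ {x}, d ≠ x → e ≠ x → ¬ Collinear ℝ {p d, p e, p x} := fun hdx hex =>
    hgen _ _ _ hde hex hdx
  obtain ⟨g, hg, hside⟩ := exists_linearMap_two_above_line finrank_euclideanSpace_fin
    (hinj.ne hde) (off_line hd.1 he.1) (off_line hd.2.1 he.2.1) (off_line hd.2.2 he.2.2)
  rcases hside with ⟨h₁, h₂⟩ | ⟨h₁, h₂⟩ | ⟨h₁, h₂⟩
  · exact exists_convexPosition_four_of_two_above_line hinj hab hde g hg h₁ h₂ ha hb
  · exact exists_convexPosition_four_of_two_above_line hinj hac hde g hg h₁ h₂ ha hc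
  · exact exists_convexPosition_four_of_two_above_line hinj hbc hde g hg h₁ h₂ hb hc
end
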